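/- Fix k ≥ 2. There exist infinitely many positive integers N with N ≢ 1 (mod q) for every prime q with (q−1) | k, such that for all primes p < N^(1/k), the integer N − p^k has at least d(k) prime factors counted with multiplicity. -/

import Mathlib

/-!
Take `N = c ^ k` with `c = x ^ 2` and `x` a multiple of `(k + 1)!`. A prime `q` with `q - 1 ∣ k`
is at most `k + 1`, so it divides `N`. For a prime `p < c`, the number `c - 1 = (x - 1)(x + 1)`
is composite, so `c - p ≥ 2`. Now `c ^ k - p ^ k` is the product over `d ∣ k` of the homogenized
cyclotomic values `p ^ φ(d) Φ_d(c / p)` (in Lean, `(cyclotomic d ℤ).scaleRoots p` evaluated at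
`c`), and each of these `d(k)` integers is at least `(c - p) ^ φ(d) ≥ 2`.
-/

open Polynomial Finset ArithmeticFunction
open scoped ArithmeticFunction.Omega Nat

lemma ArithmeticFunction.card_le_cardFactors_prod {ι : Type*} {s : Finset ι} {f : ι → ℕ}
    (hf : ∀ i ∈ s, 2 ≤ f i) : #s ≤ Ω (∏ i ∈ s, f i) := by
  induction s using Finset.cons_induction with
  | empty => simp
  | cons a s _ ih =>
    have hfa : 2 ≤ f a := hf a (mem_cons_self a s)
    have hs : ∀ i ∈ s, 2 ≤ f i := fun i hi => hf i (mem_cons_of_mem hi)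
    have hprod : ∏ i ∈ s, f i ≠ 0 := prod_ne_zero_iff.2 fun i hi => by have := hs i hi; omega
    rw [prod_cons, card_cons, cardFactors_mul (by omega) hprod]
    have := cardFactors_pos_iff_one_lt.2 hfa
    have := ih hs
    omega

lemma Polynomial.prod_scaleRoots {R ι : Type*} [CommRing R] [NoZeroDivisors R] (s : Finset ι)
    (p : ι → R[X]) (r : R) : (∏ i ∈ s, p i).scaleRoots r = ∏ i ∈ s, (p i).scaleRoots r := by
  induction s using Finset.cons_induction with
  | empty => simp
  | cons a s _ ih => rw [prod_cons, prod_cons, mul_scaleRoots_of_noZeroDivisors, ih]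

lemma Polynomial.X_pow_sub_one_scaleRoots {R : Type*} [CommRing R] [Nontrivial R] {k : ℕ}
    (hk : k ≠ 0) (r : R) :
    (X ^ k - 1 : R[X]).scaleRoots r = X ^ k - C (r ^ k) := by
  ext n
  rw [coeff_scaleRoots, ← C_1, natDegree_X_pow_sub_C, coeff_sub, coeff_sub, coeff_X_pow, coeff_C,
    coeff_C]
  split_ifs <;> simp_all

lemma Polynomial.prod_cyclotomic_scaleRoots_eval {R : Type*} [CommRing R] [IsDomain R] {k : ℕ}
    (hk : k ≠ 0) (a b : R) :
    ∏ d ∈ k.divisors, ((cyclotomic d R).scaleRoots b).eval a = a ^ k - b ^ k := by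
  rw [← eval_prod, ← prod_scaleRoots, prod_cyclotomic_eq_X_pow_sub_one (Nat.pos_of_ne_zero hk),
    X_pow_sub_one_scaleRoots hk]
  simp

lemma Polynomial.sub_pow_totient_le_cyclotomic_scaleRoots_eval (d : ℕ) {a b : ℝ} (hb : 0 < b)
    (hab : b < a) : (a - b) ^ d.totient ≤ ((cyclotomic d ℝ).scaleRoots b).eval a := by
  have h : a = b * (a / b) := by field_simp
  have h1 : 1 < a / b := (one_lt_div hb).2 hab
  calc (a - b) ^ d.totient = b ^ d.totient * (a / b - 1) ^ d.totient := by
        rw [← mul_pow, mul_sub, ← h, mul_one]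
    _ ≤ b ^ d.totient * (cyclotomic d ℝ).eval (a / b) := by
        gcongr; exact sub_one_pow_totient_le_cyclotomic_eval h1 d
    _ = _ := by rw [h, scaleRoots_eval_mul, natDegree_cyclotomic, ← h]

lemma Polynomial.sub_pow_totient_le_cyclotomic_scaleRoots_eval_int (d : ℕ) {a b : ℤ} (hb : 0 < b)
    (hab : b < a) : (a - b) ^ d.totient ≤ ((cyclotomic d ℤ).scaleRoots b).eval a := by
  have hmap : ((cyclotomic d ℤ).scaleRoots b).map (Int.castRingHom ℝ) =
      (cyclotomic d ℝ).scaleRoots (b : ℝ) := by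
    rw [map_scaleRoots _ _ _ (by simp [(cyclotomic.monic d ℤ).leadingCoeff]), map_cyclotomic]
    rfl
  have := sub_pow_totient_le_cyclotomic_scaleRoots_eval d (a := a) (b := b) (by exact_mod_cast hb)
    (by exact_mod_cast hab)
  rw [← hmap, eval_map, eval₂_at_intCast, eq_intCast] at this
  exact_mod_cast this

lemma card_divisors_le_cardFactors_pow_sub_pow {k a b : ℕ} (hk : k ≠ 0) (hb : 0 < b)
    (hab : b + 2 ≤ a) : #k.divisors ≤ Ω (a ^ k - b ^ k) := by
  set H : ℕ → ℤ := fun d => ((cyclotomic d ℤ).scaleRoots (b : ℤ)).eval (a : ℤ)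
  have hH : ∀ d ∈ k.divisors, 2 ≤ H d := fun d hd => calc
    (2 : ℤ) ≤ 2 ^ d.totient := le_self_pow₀ (by norm_num)
      (Nat.totient_pos.2 (Nat.pos_of_mem_divisors hd)).ne'
    _ ≤ ((a : ℤ) - b) ^ d.totient := by gcongr; omega
    _ ≤ H d := sub_pow_totient_le_cyclotomic_scaleRoots_eval_int d (by omega) (by omega)
  have hprod : a ^ k - b ^ k = ∏ d ∈ k.divisors, (H d).natAbs := by
    have hle : b ^ k ≤ a ^ k := Nat.pow_le_pow_left (by omega) k
    zify [hle]
    rw [prod_congr rfl fun d hd => abs_of_nonneg (by linarith [hH d hd]),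
      prod_cyclotomic_scaleRoots_eval hk]
  rw [hprod]
  exact card_le_cardFactors_prod fun d hd => by have := hH d hd; omega

lemma Nat.not_modEq_one_of_dvd {q N : ℕ} (hq : q ≠ 1) (h : q ∣ N) : ¬N ≡ 1 [MOD q] :=
  fun hN => hq (Nat.dvd_one.1 ((hN.dvd_iff dvd_rfl).1 h))

lemma Nat.Prime.dvd_factorial_succ_of_sub_one_dvd {q k : ℕ} (hq : q.Prime) (hk : k ≠ 0)
    (h : q - 1 ∣ k) : q ∣ (k + 1)! :=
  Nat.dvd_factorial hq.pos (by have := Nat.le_of_dvd (Nat.pos_of_ne_zero hk) h; omega)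

lemma Nat.add_two_le_sq_of_prime_lt {x p : ℕ} (hx : 3 ≤ x) (hp : p.Prime) (h : p < x ^ 2) :
    p + 2 ≤ x ^ 2 := by
  by_contra hlt
  have hfactor : p = (x - 1) * (x + 1) := by
    obtain ⟨y, rfl⟩ : ∃ y, x = y + 1 := ⟨x - 1, by omega⟩
    rw [Nat.add_sub_cancel]
    nlinarith
  exact Nat.not_prime_mul (by omega) (by omega) (hfactor ▸ hp)

theorem stmt_10 (k : ℕ) (hk : 2 ≤ k) :
    {N : ℕ | 0 < N ∧ (∀ q : ℕ, q.Prime → (q - 1) ∣ k → ¬ N ≡ 1 [MOD q]) ∧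
      ∀ p : ℕ, p.Prime → (p : ℝ) < (N : ℝ) ^ ((1 : ℝ) / k) →
        k.divisors.card ≤ (N - p ^ k).primeFactorsList.length}.Infinite := by
  have hk0 : k ≠ 0 := by omega
  refine Set.infinite_of_forall_exists_gt fun n => ?_
  set x := (k + 1)! * (n + 3)
  have hx : n + 3 ≤ x := Nat.le_mul_of_pos_left _ (Nat.factorial_pos _)
  refine ⟨(x ^ 2) ^ k, ⟨by positivity, fun q hq hqk => ?_, fun p hp hpN => ?_⟩, ?_⟩
  · refine Nat.not_modEq_one_of_dvd hq.ne_one (dvd_pow (dvd_pow ?_ two_ne_zero) hk0)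
    exact (hq.dvd_factorial_succ_of_sub_one_dvd hk0 hqk).trans (dvd_mul_right _ _)
  · have hpx : p < x ^ 2 := by
      rw [one_div, Nat.cast_pow, Real.pow_rpow_inv_natCast (by positivity) hk0] at hpN
      exact_mod_cast hpN
    rw [← cardFactors_apply]
    exact card_divisors_le_cardFactors_pow_sub_pow hk0 hp.pos
      (Nat.add_two_le_sq_of_prime_lt (by omega) hp hpx)
  · calc n < x := by omega
      _ ≤ x ^ 2 := Nat.le_self_pow two_ne_zero _
      _ ≤ (x ^ 2) ^ k := Nat.le_self_pow hk0 _
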